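/- arXiv:2208.12186 — 5 statements merged into one kernel-verified Lean document; each statement's English description precedes it below -/
import Mathlib

section
/- For all real x > 0 and all real y and ν, the function t ↦ t^{ν-1} e^{-x/t - y t} is integrable on the open interval (0, 1). -/
open MeasureTheory Real
open scoped Nat

/-!
Near `0` the factor `exp (-x / t)` decays faster than any power of `t`: from `uⁿ / n! ≤ exp u`
with `u = x / t` one gets `exp (-x / t) ≤ n! tⁿ / xⁿ`, so for `n ≥ 1 - ν` the product
`t ^ (ν - 1) * exp (-x / t)` stays bounded on `(0, 1)`. As `exp (-y t) ≤ exp |y|` there, the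
integrand is bounded on a set of finite measure.
-/

namespace Real

lemma exp_neg_le_factorial_div_pow {u : ℝ} (hu : 0 < u) (n : ℕ) : exp (-u) ≤ n ! / u ^ n := by
  rw [exp_neg, ← inv_div]
  exact inv_anti₀ (by positivity) (pow_div_factorial_le_exp _ hu.le n)

lemma rpow_mul_exp_neg_div_le {x s t : ℝ} {n : ℕ} (hx : 0 < x) (ht₀ : 0 < t) (ht₁ : t ≤ 1)
    (hsn : 0 ≤ s + n) : t ^ s * exp (-x / t) ≤ n ! / x ^ n := by
  have hdecay : exp (-x / t) ≤ n ! / x ^ n * t ^ (n : ℝ) :=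
    calc exp (-x / t) = exp (-(x / t)) := by rw [neg_div]
      _ ≤ n ! / (x / t) ^ n := exp_neg_le_factorial_div_pow (div_pos hx ht₀) n
      _ = n ! / x ^ n * t ^ (n : ℝ) := by rw [rpow_natCast, div_pow]; field_simp
  calc t ^ s * exp (-x / t) ≤ t ^ s * (n ! / x ^ n * t ^ (n : ℝ)) := by gcongr
    _ = n ! / x ^ n * t ^ (s + n) := by rw [rpow_add ht₀]; ring
    _ ≤ n ! / x ^ n := mul_le_of_le_one_right (by positivity) (rpow_le_one ht₀.le ht₁ hsn)

lemma neg_mul_le_abs_of_le_one {y t : ℝ} (ht₀ : 0 ≤ t) (ht₁ : t ≤ 1) : -(y * t) ≤ |y| :=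
  calc -(y * t) ≤ |y * t| := neg_le_abs _
    _ = |y| * t := by rw [abs_mul, abs_of_nonneg ht₀]
    _ ≤ |y| := mul_le_of_le_one_right (abs_nonneg y) ht₁

end Real

/-- For all real `x > 0` and all real `y`, `ν`, the function
`t ↦ t^{ν-1} e^{-x/t - y t}` is integrable on the open interval `(0, 1)`. -/
theorem leakyAquifer_alt_integrand_integrableOn (x y ν : ℝ) (hx : 0 < x) :
    IntegrableOn (fun t : ℝ => t ^ (ν - 1) * Real.exp (-x / t - y * t))
      (Set.Ioo 0 1) := by
  obtain ⟨n, hn⟩ := exists_nat_ge (1 - ν)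
  refine Measure.integrableOn_of_bounded (M := n ! / x ^ n * exp |y|) measure_Ioo_lt_top.ne
    (by fun_prop) ?_
  filter_upwards [ae_restrict_mem measurableSet_Ioo] with t ⟨ht₀, ht₁⟩
  rw [norm_of_nonneg (by positivity), sub_eq_add_neg (-x / t), exp_add, ← mul_assoc]
  gcongr
  · exact rpow_mul_exp_neg_div_le hx ht₀ ht₁.le (by linarith)
  · exact neg_mul_le_abs_of_le_one ht₀.le ht₁.le
end

section
/- For all real x > 0 and all real y and ν, the series ∑_{j=0}^∞ Γ(-ν-j, x) · (-x y)^j / j! converges absolutely and K_ν(x,y) = x^ν · ∑_{j=0}^∞ Γ(-ν-j, x) · (-x y)^j / j!, where Γ(α, x) = ∫_x^∞ t^{α-1} e^{-t} dt denotes the upper incomplete gamma function. -/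
/-!
Expanding `exp (-y / t)` in its power series turns the integrand of `K_ν(x, y)` into
`∑ j, exp (-x t) t^(-(ν+1)-j) (-y)^j / j!`. The substitution `s = x t` integrates the `j`-th term
over `(1, ∞)` to `x^(ν+j) Γ(-ν-j, x) (-y)^j / j!`. On `t ≥ 1` the `j`-th term is dominated by
`exp (-x t) t^max(-(ν+1), 0) |y|^j / j!`, so the integrals of the norms are summable: this justifies
exchanging sum and integral and also gives the absolute convergence of the series.
-/

open MeasureTheory Real Set Filter Asymptotics Nat

/-- The upper incomplete gamma function `Γ(α, x) = ∫_x^∞ t^{α-1} e^{-t} dt`. -/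
noncomputable def upperIncGamma (α x : ℝ) : ℝ :=
  ∫ t in Set.Ioi x, t ^ (α - 1) * Real.exp (-t)

theorem integrableOn_exp_neg_mul_mul_rpow_Ioi {x a : ℝ} (hx : 0 < x) (ha : 0 < a) (α : ℝ) :
    IntegrableOn (fun t => exp (-x * t) * t ^ α) (Ioi a) := by
  refine integrable_of_isBigO_exp_neg (half_pos hx) ?_ ?_
  · exact (by fun_prop : Continuous fun t => exp (-x * t)).continuousOn.mul
      (continuousOn_id.rpow_const fun t ht => Or.inl (ha.trans_le ht).ne')
  · refine ((isBigO_refl (fun t => exp (-x * t)) atTop).mul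
      (isLittleO_rpow_exp_pos_mul_atTop α (half_pos hx)).isBigO).congr_right fun t => ?_
    rw [← exp_add]
    ring_nf

theorem setIntegral_Ioi_exp_neg_mul_mul_rpow {x a : ℝ} (hx : 0 < x) (ha : 0 ≤ a) (α : ℝ) :
    ∫ t in Ioi a, exp (-x * t) * t ^ α = x ^ (-(α + 1)) * upperIncGamma (α + 1) (x * a) := by
  have hscale : ∫ t in Ioi a, (x * t) ^ α * exp (-(x * t))
      = x ^ α * ∫ t in Ioi a, exp (-x * t) * t ^ α := by
    rw [← integral_const_mul]
    refine setIntegral_congr_fun measurableSet_Ioi fun t ht => ?_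
    rw [mul_rpow hx.le (ha.trans (le_of_lt ht)), neg_mul]
    ring
  rw [upperIncGamma, add_sub_cancel_right,
    ← integral_comp_mul_left_Ioi' (fun s => s ^ α * exp (-s)) a hx, smul_eq_mul, hscale,
    rpow_neg hx.le, rpow_add_one hx.ne']
  field_simp

noncomputable def aquiferTerm (x y ν : ℝ) (j : ℕ) (t : ℝ) : ℝ :=
  exp (-x * t) * t ^ (-(ν + 1) - j) * ((-y) ^ j / j !)

theorem hasSum_aquiferTerm (x y ν : ℝ) {t : ℝ} (ht : 0 < t) :
    HasSum (fun j => aquiferTerm x y ν j t) (exp (-x * t - y / t) * t ^ (-(ν + 1))) := by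
  have hexp := (NormedSpace.expSeries_div_hasSum_exp (-y / t)).mul_left
    (exp (-x * t) * t ^ (-(ν + 1)))
  rw [← exp_eq_exp_ℝ] at hexp
  rw [sub_eq_add_neg, exp_add, ← neg_div, mul_right_comm]
  refine hexp.congr_fun fun j => ?_
  rw [aquiferTerm, rpow_sub ht, rpow_natCast, div_pow]
  field_simp

theorem integrableOn_aquiferTerm {x : ℝ} (hx : 0 < x) (y ν : ℝ) (j : ℕ) :
    IntegrableOn (aquiferTerm x y ν j) (Ioi 1) :=
  (integrableOn_exp_neg_mul_mul_rpow_Ioi hx one_pos _).mul_const _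

theorem integral_aquiferTerm {x : ℝ} (hx : 0 < x) (y ν : ℝ) (j : ℕ) :
    ∫ t in Ioi 1, aquiferTerm x y ν j t
      = x ^ ν * (upperIncGamma (-ν - j) x * (-(x * y)) ^ j / j !) := by
  simp only [aquiferTerm]
  rw [integral_mul_const, setIntegral_Ioi_exp_neg_mul_mul_rpow hx zero_le_one, mul_one,
    show -(ν + 1) - j + 1 = -ν - j by ring, show -(-ν - j) = ν + j by ring,
    rpow_add hx, rpow_natCast, neg_mul_eq_mul_neg, mul_pow]
  ring

theorem norm_aquiferTerm_le (x y ν : ℝ) (j : ℕ) {t : ℝ} (ht : 1 ≤ t) :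
    ‖aquiferTerm x y ν j t‖ ≤ exp (-x * t) * t ^ max (-(ν + 1)) 0 * (|y| ^ j / j !) := by
  have hpow : t ^ (-(ν + 1) - j) ≤ t ^ max (-(ν + 1)) 0 :=
    rpow_le_rpow_of_exponent_le ht ((sub_le_self _ j.cast_nonneg).trans (le_max_left _ _))
  rw [aquiferTerm, norm_mul, norm_mul, norm_div, norm_pow, norm_neg, norm_of_nonneg (exp_pos _).le,
    norm_of_nonneg (rpow_nonneg (zero_le_one.trans ht) _), norm_natCast, norm_eq_abs]
  gcongr

theorem summable_integral_norm_aquiferTerm {x : ℝ} (hx : 0 < x) (y ν : ℝ) :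
    Summable fun j => ∫ t in Ioi 1, ‖aquiferTerm x y ν j t‖ := by
  set C := ∫ t in Ioi 1, exp (-x * t) * t ^ max (-(ν + 1)) 0
  have hbound (j : ℕ) : ∫ t in Ioi 1, ‖aquiferTerm x y ν j t‖ ≤ C * (|y| ^ j / j !) := by
    rw [← integral_mul_const]
    exact setIntegral_mono_on (integrableOn_aquiferTerm hx y ν j).norm
      ((integrableOn_exp_neg_mul_mul_rpow_Ioi hx one_pos _).mul_const _) measurableSet_Ioi
      fun t ht => norm_aquiferTerm_le x y ν j (le_of_lt ht)
  exact .of_nonneg_of_le (fun j => integral_nonneg fun t => norm_nonneg _) hbound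
    ((summable_pow_div_factorial |y|).mul_left C)

/-- For all real `x > 0` and all real `y`, `ν`, the series
`∑_{j=0}^∞ Γ(-ν-j, x) (-x y)^j / j!` converges absolutely and
`K_ν(x, y) = x^ν ∑_{j=0}^∞ Γ(-ν-j, x) (-x y)^j / j!`. -/
theorem leakyAquifer_eq_tsum_upperIncGamma (x y ν : ℝ) (hx : 0 < x) :
    (Summable fun j : ℕ =>
        |upperIncGamma (-ν - j) x * (-(x * y)) ^ j / (Nat.factorial j)|) ∧
      (∫ t in Set.Ioi (1 : ℝ), Real.exp (-x * t - y / t) * t ^ (-(ν + 1)))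
        = x ^ ν *
          ∑' j : ℕ, upperIncGamma (-ν - j) x * (-(x * y)) ^ j / (Nat.factorial j) := by
  have hnorm := summable_integral_norm_aquiferTerm hx y ν
  have hK : ∫ t in Ioi 1, exp (-x * t - y / t) * t ^ (-(ν + 1))
      = ∫ t in Ioi 1, ∑' j, aquiferTerm x y ν j t :=
    setIntegral_congr_fun measurableSet_Ioi fun t ht =>
      (hasSum_aquiferTerm x y ν (one_pos.trans ht)).tsum_eq.symm
  have hterms := hasSum_integral_of_summable_integral_norm (integrableOn_aquiferTerm hx y ν) hnorm
  simp only [integral_aquiferTerm hx] at hterms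
  have hxν : 0 < x ^ ν := rpow_pos_of_pos hx ν
  refine ⟨?_, by rw [hK, ← hterms.tsum_eq, tsum_mul_left]⟩
  have habs : Summable fun j : ℕ => |x ^ ν * (upperIncGamma (-ν - j) x * (-(x * y)) ^ j / j !)| :=
    .of_nonneg_of_le (fun j => abs_nonneg _) (fun j => by
      rw [← integral_aquiferTerm hx]
      exact norm_integral_le_integral_norm (aquiferTerm x y ν j)) hnorm
  simpa [abs_mul, abs_of_pos hxν, hxν.ne'] using habs.mul_left (x ^ ν)⁻¹
end

section
/- For all real x > 0 and all real y and ν, define g : (0,1) → ℝ by g(s) = τ(s)^{ν-1} e^{-x/τ(s) - y τ(s)} / ( (1-s)² · cosh²(s/(1-s)) ), where τ(s) = tanh(s/(1-s)). Then g is smooth on (0,1), and for every natural number n the n-th derivative of g tends to 0 as s → 0⁺ and as s → 1⁻. In particular g extends to a function on [0,1] all of whose one-sided derivatives of every order vanish at both endpoints. -/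
/-! On `(0, 1)` the integrand is `g = P * ρ²`, where `ρ s = (1 - s)⁻¹` and
`P = τ^(ν-1) * exp (-x/τ - y τ) * (1 - τ²)`, because `1 - tanh² = cosh⁻²`.
From `ρ' = ρ²`, `τ' = (1 - τ²) ρ²` and `(τ⁻¹)' = (1 - τ⁻²) ρ²`, the algebra generated by
`ρ`, `τ`, `τ⁻¹` is closed under differentiation, and `P' = P * a` with `a` in that algebra.
Hence every derivative of `g` is `P` times an element of the algebra, so `g` is smooth, and
such an element grows at most like a power of `τ⁻¹` as `s → 0⁺` and like a power of
`(1 - s)⁻¹` as `s → 1⁻`, whereas `P` decays faster than any such power: like `exp (-x/τ)`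
at `0` and like `cosh⁻² (s / (1 - s))` at `1`. -/

open Real Filter Set Topology

namespace Real

theorem one_sub_tanh_sq (u : ℝ) : 1 - tanh u ^ 2 = (cosh u ^ 2)⁻¹ := by
  have := (cosh_pos u).ne'
  rw [tanh_eq_sinh_div_cosh]
  field_simp
  linarith [cosh_sq_sub_sinh_sq u]

theorem hasDerivAt_tanh (u : ℝ) : HasDerivAt tanh (1 - tanh u ^ 2) u := by
  have h := (hasDerivAt_sinh u).div (hasDerivAt_cosh u) (cosh_pos u).ne'
  rw [show sinh / cosh = tanh from funext fun v => (tanh_eq_sinh_div_cosh v).symm] at h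
  refine h.congr_deriv ?_
  rw [one_sub_tanh_sq, ← sq, ← sq, cosh_sq_sub_sinh_sq, one_div]

theorem continuous_tanh : Continuous tanh :=
  continuous_iff_continuousAt.2 fun u => (hasDerivAt_tanh u).continuousAt

theorem tanh_pos {u : ℝ} (hu : 0 < u) : 0 < tanh u := by
  rw [tanh_eq_sinh_div_cosh]
  exact div_pos (sinh_pos_iff.2 hu) (cosh_pos u)

theorem tendsto_one_add_pow_div_cosh_sq_atTop (i : ℕ) :
    Tendsto (fun u => (1 + u) ^ i / cosh u ^ 2) atTop (𝓝 0) := by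
  have hexp : Tendsto (fun u => (1 + u) ^ i * (2 * exp (-u))) atTop (𝓝 0) := by
    have := ((tendsto_pow_mul_exp_neg_atTop_nhds_zero i).comp
      (tendsto_atTop_add_const_left atTop 1 tendsto_id)).mul_const (2 * exp 1)
    rw [zero_mul] at this
    refine this.congr fun u => ?_
    simp only [Function.comp_apply, id]
    rw [show -(1 + u) = -u - 1 by ring, exp_sub]
    field_simp
  refine tendsto_of_tendsto_of_tendsto_of_le_of_le' tendsto_const_nhds hexp ?_ ?_
  · filter_upwards [eventually_ge_atTop 0] with u hu
    positivity
  · filter_upwards [eventually_ge_atTop 0] with u hu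
    have hcosh : exp u ≤ 2 * cosh u ^ 2 := by -- `exp u ≤ 2 cosh u ≤ 2 cosh² u`
      nlinarith [cosh_eq u, exp_pos (-u), one_le_cosh u]
    rw [div_eq_mul_inv]
    gcongr
    rw [exp_neg, ← div_eq_mul_inv, le_div_iff₀ (exp_pos u), inv_mul_le_iff₀ (by positivity)]
    linarith

theorem tendsto_tanh_atTop : Tendsto tanh atTop (𝓝 1) := by
  have h := (tendsto_one_add_pow_div_cosh_sq_atTop 0).const_sub 1
  simp only [pow_zero, one_div, ← one_sub_tanh_sq, sub_sub_cancel, sub_zero] at h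
  refine tendsto_of_tendsto_of_tendsto_of_le_of_le' h tendsto_const_nhds ?_
    (Eventually.of_forall fun u => (tanh_lt_one u).le)
  filter_upwards [eventually_gt_atTop 0] with u hu
  nlinarith [tanh_lt_one u, tanh_pos hu]

end Real

theorem tendsto_rpow_mul_exp_neg_div_nhdsGT_zero {x : ℝ} (hx : 0 < x) (α : ℝ) :
    Tendsto (fun t => t ^ α * exp (-x / t)) (𝓝[>] 0) (𝓝 0) := by
  refine ((tendsto_rpow_mul_exp_neg_mul_atTop_nhds_zero (-α) x hx).comp
    tendsto_inv_nhdsGT_zero).congr' ?_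
  filter_upwards [self_mem_nhdsWithin] with t (ht : 0 < t)
  simp [Real.inv_rpow ht.le, Real.rpow_neg ht.le, div_eq_mul_inv]

section DerivClosed

variable {𝕜 : Type*} [NontriviallyNormedField 𝕜] {U : Set 𝕜}

def Subalgebra.IsDerivClosedOn (S : Subalgebra 𝕜 (𝕜 → 𝕜)) (U : Set 𝕜) : Prop :=
  ∀ q ∈ S, ∃ q' ∈ S, ∀ x ∈ U, HasDerivAt q (q' x) x

theorem Algebra.adjoin_isDerivClosedOn {s : Set (𝕜 → 𝕜)}
    (hs : ∀ f ∈ s, ∃ f' ∈ Algebra.adjoin 𝕜 s, ∀ x ∈ U, HasDerivAt f (f' x) x) :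
    (Algebra.adjoin 𝕜 s).IsDerivClosedOn U := by
  intro f hf
  induction hf using Algebra.adjoin_induction with
  | mem f hf => exact hs f hf
  | algebraMap r => exact ⟨0, zero_mem _, fun x _ => hasDerivAt_const x r⟩
  | add f g _ _ hf hg =>
    obtain ⟨f', hf', hdf⟩ := hf
    obtain ⟨g', hg', hdg⟩ := hg
    exact ⟨f' + g', add_mem hf' hg', fun x hx => (hdf x hx).add (hdg x hx)⟩
  | mul f g hfS hgS hf hg =>
    obtain ⟨f', hf', hdf⟩ := hf
    obtain ⟨g', hg', hdg⟩ := hg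
    exact ⟨f' * g + f * g', add_mem (mul_mem hf' hgS) (mul_mem hfS hg'),
      fun x hx => (hdf x hx).mul (hdg x hx)⟩

namespace Subalgebra.IsDerivClosedOn

variable {S : Subalgebra 𝕜 (𝕜 → 𝕜)} {P a g q₀ : 𝕜 → 𝕜}

theorem exists_hasDerivAt_mul (hS : S.IsDerivClosedOn U) (ha : a ∈ S)
    (hP : ∀ x ∈ U, HasDerivAt P (P x * a x) x) {q : 𝕜 → 𝕜} (hq : q ∈ S) :
    ∃ q' ∈ S, ∀ x ∈ U, HasDerivAt (P * q) (P x * q' x) x := by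
  obtain ⟨q', hq', hdq⟩ := hS q hq
  refine ⟨a * q + q', add_mem (mul_mem ha hq) hq', fun x hx => ?_⟩
  refine ((hP x hx).mul (hdq x hx)).congr_deriv ?_
  simp only [Pi.add_apply, Pi.mul_apply]
  ring

theorem exists_iteratedDeriv_eqOn_mul (hS : S.IsDerivClosedOn U) (ha : a ∈ S)
    (hP : ∀ x ∈ U, HasDerivAt P (P x * a x) x) (hU : IsOpen U) (hq₀ : q₀ ∈ S)
    (hg : EqOn g (P * q₀) U) (n : ℕ) : ∃ q ∈ S, EqOn (iteratedDeriv n g) (P * q) U := by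
  induction n with
  | zero => exact ⟨q₀, hq₀, by simpa using hg⟩
  | succ n ih =>
    obtain ⟨q, hq, hgq⟩ := ih
    obtain ⟨q', hq', hdq⟩ := hS.exists_hasDerivAt_mul ha hP hq
    refine ⟨q', hq', fun x hx => ?_⟩
    rw [iteratedDeriv_succ, (hgq.eventuallyEq_of_mem (hU.mem_nhds hx)).deriv_eq]
    exact (hdq x hx).deriv

theorem contDiffOn_of_eqOn_mul (hS : S.IsDerivClosedOn U) (ha : a ∈ S)
    (hP : ∀ x ∈ U, HasDerivAt P (P x * a x) x) (hU : IsOpen U) (hq₀ : q₀ ∈ S)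
    (hg : EqOn g (P * q₀) U) {n : ℕ∞} : ContDiffOn 𝕜 n g U := by
  refine contDiffOn_of_differentiableOn_deriv fun m _ => ?_
  obtain ⟨q, hq, hgq⟩ := hS.exists_iteratedDeriv_eqOn_mul ha hP hU hq₀ hg m
  obtain ⟨q', -, hdq⟩ := hS.exists_hasDerivAt_mul ha hP hq
  exact DifferentiableOn.congr (fun x hx => (hdq x hx).differentiableAt.differentiableWithinAt)
    ((iteratedDerivWithin_of_isOpen hU).trans hgq)

end Subalgebra.IsDerivClosedOn

end DerivClosed

section PolyGrowth

variable {α 𝕜 : Type*} [Field 𝕜] [TopologicalSpace 𝕜] [IsTopologicalRing 𝕜]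
  {l : Filter α} {w : α → 𝕜}

def subalgebraPolyGrowth (hw : Tendsto w l (𝓝 0)) : Subalgebra 𝕜 (α → 𝕜) where
  carrier := {q | ∃ m : ℕ, ∃ L, Tendsto (w ^ m * q) l (𝓝 L)}
  mul_mem' := by
    rintro f g ⟨m, L, hf⟩ ⟨k, K, hg⟩
    refine ⟨m + k, L * K, (hf.mul hg).congr fun a => ?_⟩
    simp only [Pi.mul_apply, Pi.pow_apply]
    ring
  add_mem' := by
    rintro f g ⟨m, L, hf⟩ ⟨k, K, hg⟩
    refine ⟨m + k, 0 ^ k * L + 0 ^ m * K,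
      (((hw.pow k).mul hf).add ((hw.pow m).mul hg)).congr fun a => ?_⟩
    simp only [Pi.add_apply, Pi.mul_apply, Pi.pow_apply]
    ring
  algebraMap_mem' r := ⟨0, r, by simpa [Pi.algebraMap_def] using tendsto_const_nhds⟩

theorem tendsto_mul_nhds_zero_of_mem_subalgebraPolyGrowth {hw : Tendsto w l (𝓝 0)}
    {P q : α → 𝕜}
    (hw₀ : ∀ᶠ a in l, w a ≠ 0) (hP : ∀ m : ℕ, Tendsto (P / w ^ m) l (𝓝 0))
    (hq : q ∈ subalgebraPolyGrowth hw) : Tendsto (P * q) l (𝓝 0) := by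
  obtain ⟨m, L, hq⟩ := hq
  refine (zero_mul L ▸ (hP m).mul hq).congr' ?_
  filter_upwards [hw₀] with a ha
  simp only [Pi.mul_apply, Pi.div_apply, Pi.pow_apply]
  field_simp

end PolyGrowth

namespace TanhSubstitution

noncomputable def ρ (s : ℝ) : ℝ := (1 - s)⁻¹

noncomputable def τ (s : ℝ) : ℝ := tanh (s / (1 - s))

noncomputable def tanhAlgebra : Subalgebra ℝ (ℝ → ℝ) := Algebra.adjoin ℝ {ρ, τ, τ⁻¹}

noncomputable def prefactor (x y ν s : ℝ) : ℝ :=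
  τ s ^ (ν - 1) * exp (-x / τ s - y * τ s) * (1 - τ s ^ 2)

theorem ρ_mem : ρ ∈ tanhAlgebra := Algebra.subset_adjoin (by simp)

theorem τ_mem : τ ∈ tanhAlgebra := Algebra.subset_adjoin (by simp)

theorem τ_inv_mem : τ⁻¹ ∈ tanhAlgebra := Algebra.subset_adjoin (by simp)

theorem hasDerivAt_div_one_sub {s : ℝ} (hs : s ≠ 1) :
    HasDerivAt (fun s => s / (1 - s)) (ρ s ^ 2) s := by
  have hs' : 1 - s ≠ 0 := sub_ne_zero.2 hs.symm
  refine ((hasDerivAt_id' s).div ((hasDerivAt_id' s).const_sub 1) hs').congr_deriv ?_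
  rw [ρ, inv_pow]
  field_simp
  ring

theorem hasDerivAt_ρ {s : ℝ} (hs : s ≠ 1) : HasDerivAt ρ (ρ s ^ 2) s := by
  have hs' : 1 - s ≠ 0 := sub_ne_zero.2 hs.symm
  refine (((hasDerivAt_id' s).const_sub 1).inv hs').congr_deriv ?_
  simp [ρ]

theorem hasDerivAt_τ {s : ℝ} (hs : s ≠ 1) : HasDerivAt τ ((1 - τ s ^ 2) * ρ s ^ 2) s :=
  (hasDerivAt_tanh _).comp s (hasDerivAt_div_one_sub hs)

theorem τ_pos {s : ℝ} (hs : s ∈ Ioo 0 1) : 0 < τ s :=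
  tanh_pos (div_pos hs.1 (sub_pos.2 hs.2))

theorem hasDerivAt_τ_inv {s : ℝ} (hs : s ∈ Ioo 0 1) :
    HasDerivAt τ⁻¹ ((1 - τ⁻¹ s ^ 2) * ρ s ^ 2) s := by
  have hτ := (τ_pos hs).ne'
  refine ((hasDerivAt_τ hs.2.ne).inv hτ).congr_deriv ?_
  simp only [Pi.inv_apply]
  field_simp
  ring

theorem tanhAlgebra_isDerivClosedOn : tanhAlgebra.IsDerivClosedOn (Ioo 0 1) := by
  refine Algebra.adjoin_isDerivClosedOn ?_
  rintro f (rfl | rfl | rfl)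
  · exact ⟨ρ ^ 2, pow_mem ρ_mem 2, fun s hs => hasDerivAt_ρ hs.2.ne⟩
  · exact ⟨(1 - τ ^ 2) * ρ ^ 2,
      mul_mem (sub_mem (one_mem _) (pow_mem τ_mem 2)) (pow_mem ρ_mem 2),
      fun s hs => hasDerivAt_τ hs.2.ne⟩
  · exact ⟨(1 - τ⁻¹ ^ 2) * ρ ^ 2,
      mul_mem (sub_mem (one_mem _) (pow_mem τ_inv_mem 2)) (pow_mem ρ_mem 2),
      fun s hs => hasDerivAt_τ_inv hs⟩

noncomputable def logDerivPrefactor (x y ν : ℝ) : ℝ → ℝ :=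
  ((ν - 1) • τ⁻¹ + x • τ⁻¹ ^ 2 - algebraMap ℝ _ y) * (1 - τ ^ 2) * ρ ^ 2 -
    (2 : ℝ) • τ * ρ ^ 2

theorem logDerivPrefactor_mem (x y ν : ℝ) : logDerivPrefactor x y ν ∈ tanhAlgebra := by
  have hW : 1 - τ ^ 2 ∈ tanhAlgebra := sub_mem (one_mem _) (pow_mem τ_mem 2)
  have hρ : ρ ^ 2 ∈ tanhAlgebra := pow_mem ρ_mem 2
  have hc : (ν - 1) • τ⁻¹ + x • τ⁻¹ ^ 2 - algebraMap ℝ _ y ∈ tanhAlgebra :=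
    sub_mem (add_mem (tanhAlgebra.smul_mem τ_inv_mem _)
      (tanhAlgebra.smul_mem (pow_mem τ_inv_mem 2) _)) (algebraMap_mem _ y)
  exact sub_mem (mul_mem (mul_mem hc hW) hρ) (mul_mem (tanhAlgebra.smul_mem τ_mem _) hρ)

theorem hasDerivAt_prefactor (x y ν : ℝ) :
    ∀ s ∈ Ioo (0 : ℝ) 1,
      HasDerivAt (prefactor x y ν) (prefactor x y ν s * logDerivPrefactor x y ν s) s := by
  intro s hs
  have hτ := τ_pos hs
  have hτ' := hasDerivAt_τ hs.2.ne
  have hpow := (hasDerivAt_rpow_const (p := ν - 1) (Or.inl hτ.ne')).comp s hτ'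
  have hexp := (((hasDerivAt_const s (-x)).div hτ' hτ.ne').sub (hτ'.const_mul y)).exp
  have hW := (hτ'.pow 2).const_sub 1
  refine ((hpow.mul hexp).mul hW).congr_deriv ?_
  rw [rpow_sub hτ, rpow_one]
  simp only [prefactor, logDerivPrefactor, Pi.sub_apply, Pi.mul_apply, Pi.add_apply,
    Pi.smul_apply, Pi.pow_apply, Pi.inv_apply, Pi.one_apply, Pi.div_apply, Pi.algebraMap_apply,
    Algebra.algebraMap_self, RingHom.id_apply, smul_eq_mul, Function.comp_apply]
  ring

theorem tendsto_τ_nhdsGT_zero : Tendsto τ (𝓝[>] 0) (𝓝[>] 0) := by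
  have hcont : ContinuousAt τ 0 :=
    continuous_tanh.continuousAt.comp
      (continuousAt_id.div (continuousAt_const.sub continuousAt_id) (by norm_num))
  refine tendsto_nhdsWithin_of_tendsto_nhds_of_eventually_within _ ?_ ?_
  · simpa [τ] using hcont.tendsto.mono_left nhdsWithin_le_nhds
  · filter_upwards [Ioo_mem_nhdsGT one_pos] with s hs using τ_pos hs

theorem tendsto_τ_nhds_zero : Tendsto τ (𝓝[>] 0) (𝓝 0) :=
  tendsto_τ_nhdsGT_zero.mono_right nhdsWithin_le_nhds

theorem tendsto_one_sub_nhdsLT_one : Tendsto (fun s : ℝ => 1 - s) (𝓝[<] 1) (𝓝[>] 0) := by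
  refine tendsto_nhdsWithin_of_tendsto_nhds_of_eventually_within _ ?_ ?_
  · exact ((continuous_sub_left 1).tendsto' (1 : ℝ) 0 (sub_self 1)).mono_left nhdsWithin_le_nhds
  · filter_upwards [self_mem_nhdsWithin] with s (hs : s < 1) using sub_pos.2 hs

theorem tendsto_one_sub_nhds_zero : Tendsto (fun s : ℝ => 1 - s) (𝓝[<] 1) (𝓝 0) :=
  tendsto_one_sub_nhdsLT_one.mono_right nhdsWithin_le_nhds

theorem tendsto_div_one_sub_nhdsLT_one :
    Tendsto (fun s : ℝ => s / (1 - s)) (𝓝[<] 1) atTop := by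
  refine (tendsto_atTop_add_const_right _ (-1)
    (tendsto_inv_nhdsGT_zero.comp tendsto_one_sub_nhdsLT_one)).congr' ?_
  filter_upwards [self_mem_nhdsWithin] with s (hs : s < 1)
  simp only [Function.comp_apply]
  field_simp [(sub_pos.2 hs).ne']
  ring

theorem tendsto_τ_nhdsLT_one : Tendsto τ (𝓝[<] 1) (𝓝 1) :=
  tendsto_tanh_atTop.comp tendsto_div_one_sub_nhdsLT_one

theorem tanhAlgebra_le_subalgebraPolyGrowth_zero :
    tanhAlgebra ≤ subalgebraPolyGrowth tendsto_τ_nhds_zero := by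
  refine Algebra.adjoin_le ?_
  rintro f (rfl | rfl | rfl)
  · refine ⟨0, 1, ?_⟩
    have hcont : ContinuousAt ρ 0 :=
      (continuousAt_const.sub continuousAt_id).inv₀ (by norm_num)
    simpa [ρ] using hcont.tendsto.mono_left nhdsWithin_le_nhds
  · exact ⟨0, 0, by simpa using tendsto_τ_nhds_zero⟩
  · refine ⟨1, 1, tendsto_const_nhds.congr' ?_⟩
    filter_upwards [Ioo_mem_nhdsGT one_pos] with s hs
    simp [(τ_pos hs).ne']

theorem tanhAlgebra_le_subalgebraPolyGrowth_one :
    tanhAlgebra ≤ subalgebraPolyGrowth tendsto_one_sub_nhds_zero := by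
  refine Algebra.adjoin_le ?_
  rintro f (rfl | rfl | rfl)
  · refine ⟨1, 1, tendsto_const_nhds.congr' ?_⟩
    filter_upwards [self_mem_nhdsWithin] with s (hs : s < 1)
    simp [ρ, (sub_pos.2 hs).ne']
  · exact ⟨0, 1, by simpa using tendsto_τ_nhdsLT_one⟩
  · exact ⟨0, 1, by simpa [Pi.inv_def] using tendsto_τ_nhdsLT_one.inv₀ one_ne_zero⟩

theorem tendsto_prefactor_div_τ_pow {x : ℝ} (hx : 0 < x) (y ν : ℝ) (m : ℕ) :
    Tendsto (prefactor x y ν / τ ^ m) (𝓝[>] 0) (𝓝 0) := by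
  have hrest : Tendsto (fun t => exp (-(y * t)) * (1 - t ^ 2)) (𝓝[>] 0) (𝓝 1) := by
    have : Continuous fun t => exp (-(y * t)) * (1 - t ^ 2) := by fun_prop
    simpa using (this.tendsto 0).mono_left nhdsWithin_le_nhds
  have key : Tendsto (fun t => t ^ (ν - 1) * exp (-x / t - y * t) * (1 - t ^ 2) / t ^ m)
      (𝓝[>] 0) (𝓝 0) := by
    refine (mul_one (0 : ℝ) ▸
      (tendsto_rpow_mul_exp_neg_div_nhdsGT_zero hx (ν - 1 - m)).mul hrest).congr' ?_
    filter_upwards [self_mem_nhdsWithin] with t (ht : 0 < t)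
    rw [rpow_sub ht, rpow_natCast, sub_eq_add_neg (-x / t), exp_add]
    field_simp
  exact key.comp tendsto_τ_nhdsGT_zero

theorem tendsto_prefactor_div_one_sub_pow (x y ν : ℝ) (m : ℕ) :
    Tendsto (prefactor x y ν / (fun s => 1 - s) ^ m) (𝓝[<] 1) (𝓝 0) := by
  have hbdd : Tendsto (fun s => τ s ^ (ν - 1) * exp (-x / τ s - y * τ s)) (𝓝[<] 1)
      (𝓝 (1 ^ (ν - 1) * exp (-x / 1 - y * 1))) :=
    ((tendsto_τ_nhdsLT_one.rpow_const (Or.inl one_ne_zero)).mul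
      ((continuous_exp.tendsto _).comp ((tendsto_const_nhds.div tendsto_τ_nhdsLT_one
        one_ne_zero).sub (tendsto_τ_nhdsLT_one.const_mul y))))
  have hdecay : Tendsto (fun s => (1 - τ s ^ 2) / (1 - s) ^ m) (𝓝[<] 1) (𝓝 0) := by
    refine ((tendsto_one_add_pow_div_cosh_sq_atTop m).comp
      tendsto_div_one_sub_nhdsLT_one).congr' ?_
    filter_upwards [self_mem_nhdsWithin] with s (hs : s < 1)
    have hs' := (sub_pos.2 hs).ne'
    rw [Function.comp_apply, τ, one_sub_tanh_sq,
      show 1 + s / (1 - s) = (1 - s)⁻¹ by field_simp; ring, inv_pow]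
    ring
  refine (mul_zero (1 ^ (ν - 1) * exp (-x / 1 - y * 1)) ▸ hbdd.mul hdecay).congr' ?_
  filter_upwards with s
  simp only [prefactor, Pi.div_apply, Pi.pow_apply]
  ring

theorem tendsto_prefactor_mul_nhdsGT_zero {x : ℝ} (hx : 0 < x) (y ν : ℝ) {q : ℝ → ℝ}
    (hq : q ∈ tanhAlgebra) : Tendsto (prefactor x y ν * q) (𝓝[>] 0) (𝓝 0) := by
  refine tendsto_mul_nhds_zero_of_mem_subalgebraPolyGrowth ?_ (tendsto_prefactor_div_τ_pow hx y ν)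
    (tanhAlgebra_le_subalgebraPolyGrowth_zero hq)
  filter_upwards [Ioo_mem_nhdsGT one_pos] with s hs using (τ_pos hs).ne'

theorem tendsto_prefactor_mul_nhdsLT_one (x y ν : ℝ) {q : ℝ → ℝ} (hq : q ∈ tanhAlgebra) :
    Tendsto (prefactor x y ν * q) (𝓝[<] 1) (𝓝 0) := by
  refine tendsto_mul_nhds_zero_of_mem_subalgebraPolyGrowth ?_
    (tendsto_prefactor_div_one_sub_pow x y ν) (tanhAlgebra_le_subalgebraPolyGrowth_one hq)
  filter_upwards [self_mem_nhdsWithin] with s (hs : s < 1) using (sub_pos.2 hs).ne'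

theorem prefactor_mul_ρ_sq (x y ν s : ℝ) :
    (prefactor x y ν * ρ ^ 2) s = tanh (s / (1 - s)) ^ (ν - 1) *
      exp (-x / tanh (s / (1 - s)) - y * tanh (s / (1 - s))) /
        ((1 - s) ^ 2 * cosh (s / (1 - s)) ^ 2) := by
  rw [Pi.mul_apply, Pi.pow_apply, prefactor, τ, one_sub_tanh_sq, ρ]
  field_simp

end TanhSubstitution

/-- For all real `x > 0` and all real `y`, `ν`, the transformed integrand
`g(s) = τ(s)^{ν-1} e^{-x/τ(s) - y τ(s)} / ((1-s)² cosh²(s/(1-s)))`,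
with `τ(s) = tanh(s/(1-s))`, is smooth on `(0, 1)` and, for every natural
number `n`, its `n`-th derivative tends to `0` as `s → 0⁺` and as `s → 1⁻`. -/
theorem transformed_integrand_flat_at_endpoints (x y ν : ℝ) (hx : 0 < x)
    (g : ℝ → ℝ)
    (hg : ∀ s : ℝ, g s =
      Real.tanh (s / (1 - s)) ^ (ν - 1) *
        Real.exp (-x / Real.tanh (s / (1 - s)) - y * Real.tanh (s / (1 - s)))
      / ((1 - s) ^ 2 * Real.cosh (s / (1 - s)) ^ 2)) :
    ContDiffOn ℝ (⊤ : ℕ∞) g (Set.Ioo 0 1) ∧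
      ∀ n : ℕ,
        Tendsto (iteratedDeriv n g) (nhdsWithin 0 (Set.Ioi 0)) (nhds 0) ∧
        Tendsto (iteratedDeriv n g) (nhdsWithin 1 (Set.Iio 1)) (nhds 0) := by
  open TanhSubstitution in
  have hS := tanhAlgebra_isDerivClosedOn
  have ha := logDerivPrefactor_mem x y ν
  have hP := hasDerivAt_prefactor x y ν
  have hρ : ρ ^ 2 ∈ tanhAlgebra := pow_mem ρ_mem 2
  have hg' : EqOn g (prefactor x y ν * ρ ^ 2) (Ioo 0 1) := fun s _ =>
    (hg s).trans (prefactor_mul_ρ_sq x y ν s).symm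
  refine ⟨hS.contDiffOn_of_eqOn_mul ha hP isOpen_Ioo hρ hg', fun n => ?_⟩
  obtain ⟨q, hq, hgq⟩ := hS.exists_iteratedDeriv_eqOn_mul ha hP isOpen_Ioo hρ hg' n
  exact ⟨(tendsto_prefactor_mul_nhdsGT_zero hx y ν hq).congr'
      (hgq.eventuallyEq_of_mem (Ioo_mem_nhdsGT one_pos)).symm,
    (tendsto_prefactor_mul_nhdsLT_one x y ν hq).congr'
      (hgq.eventuallyEq_of_mem (Ioo_mem_nhdsLT one_pos)).symm⟩
end

section
/- Let f : ℝ → ℝ be continuous and 1-periodic, and suppose its Fourier coefficients c_m = ∫_0^1 f(s) e^{-2πi m s} ds satisfy ∑_{m ∈ ℤ} |c_m| < ∞. Let n be a positive natural number, h = 1/n, and let T_h = h·( f(0)/2 + ∑_{k=1}^{n-1} f(k h) + f(1)/2 ) be the compound trapezoidal sum. Then the quadrature error satisfies ∫_0^1 f(s) ds - T_h = -2 ∑_{k=1}^∞ F_k, where F_k = ∫_0^1 f(s) cos(2π k s / h) ds = ∫_0^1 f(s) cos(2π k n s) ds, and the series converges absolutely. -/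
/-!
Sampling the absolutely convergent Fourier series `f = ∑ c_m e^{2πims}` at the nodes `k/n` and
averaging, the orthogonality of the `n`-th roots of unity kills every term with `n ∤ m`; by
periodicity the trapezoidal sum is that average, so it equals `∑_j c_{jn}` (aliasing). Finally
`c_0 = ∫ f`, and since `f` is real, `c_{jn} + c_{-jn} = 2 F_j`, which gives the error formula and,
through `∑ |c_m| < ∞`, the absolute convergence.
-/

open MeasureTheory Real Finset

theorem hasSum_ite_dvd_iff {α : Type*} [AddCommMonoid α] [TopologicalSpace α] {a : ℤ → α}
    {n : ℤ} (hn : n ≠ 0) {s : α} :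
    HasSum (fun m ↦ if n ∣ m then a m else 0) s ↔ HasSum (fun j ↦ a (j * n)) s := by
  rw [← (mul_left_injective₀ hn).hasSum_iff]
  · simp [Function.comp_def]
  · rintro m hm
    rw [if_neg]
    rintro ⟨j, rfl⟩
    exact hm ⟨j, mul_comm _ _⟩

theorem HasSum.nat_add_one_add_neg_add_one {α : Type*} [AddCommGroup α] [TopologicalSpace α]
    [IsTopologicalAddGroup α] {f : ℤ → α} {s : α} (hf : HasSum f s) :
    HasSum (fun k : ℕ ↦ f (k + 1) + f (-(k + 1))) (s - f 0) := by
  have h := (hasSum_nat_add_iff' 1).mpr hf.nat_add_neg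
  simpa [two_nsmul, add_sub_add_right_eq_sub] using h

theorem hasSum_nat_add_one_of_add_neg_eq_two_mul {a : ℤ → ℂ} {b : ℕ → ℝ} {s : ℝ}
    (ha : HasSum a s) (hab : ∀ k : ℕ, a k + a (-k) = ((2 * b k : ℝ) : ℂ)) :
    HasSum (fun k ↦ b (k + 1)) ((s - b 0) / 2) := by
  have ha0 : a 0 = b 0 := by
    have h := hab 0
    rw [Nat.cast_zero, neg_zero] at h
    push_cast at h
    linear_combination h / 2
  have h := ha.nat_add_one_add_neg_add_one
  rw [ha0, ← Complex.ofReal_sub] at h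
  have h2 : HasSum (fun k : ℕ ↦ ((2 * b (k + 1) : ℝ) : ℂ)) _ :=
    h.congr_fun fun k ↦ by rw [← hab]; push_cast; rfl
  simpa using (Complex.hasSum_ofReal.mp h2).div_const 2

theorem summable_abs_nat_add_one_of_add_neg_eq_two_mul {a : ℤ → ℂ} {b : ℕ → ℝ}
    (ha : Summable fun j ↦ ‖a j‖) (hab : ∀ k : ℕ, a k + a (-k) = ((2 * b k : ℝ) : ℂ)) :
    Summable fun k ↦ |b (k + 1)| := by
  refine ha.hasSum.nat_add_one_add_neg_add_one.summable.of_nonneg_of_le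
    (fun k ↦ abs_nonneg _) fun k ↦ ?_
  calc |b (k + 1)| ≤ ‖((2 * b (k + 1) : ℝ) : ℂ)‖ := by
        rw [Complex.norm_real, Real.norm_eq_abs, abs_mul, abs_two]
        linarith [abs_nonneg (b (k + 1))]
    _ = ‖a (k + 1) + a (-(k + 1))‖ := by rw [← hab]; push_cast; rfl
    _ ≤ _ := norm_add_le _ _

open Complex in
theorem sum_range_fourier_natCast_mul_div {T : ℝ} (hT : T ≠ 0) {n : ℕ} (hn : n ≠ 0) (m : ℤ) :
    ∑ k ∈ range n, fourier m ((k * T / n : ℝ) : AddCircle T) = if (n : ℤ) ∣ m then n else 0 := by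
  have hζ := isPrimitiveRoot_exp n hn
  set ζ := cexp (2 * π * I / n)
  have hterm (k : ℕ) : fourier m ((k * T / n : ℝ) : AddCircle T) = (ζ ^ m) ^ k := by
    rw [fourier_coe_apply, ← Complex.exp_int_mul, ← Complex.exp_nat_mul]
    congr 1
    have : (T : ℂ) ≠ 0 := ofReal_ne_zero.mpr hT
    push_cast
    field_simp
  simp_rw [hterm]
  split_ifs with hdvd
  · simp [(hζ.zpow_eq_one_iff_dvd m).mpr hdvd]
  · have hpow : (ζ ^ m) ^ n = 1 := by
      rw [← zpow_natCast, ← zpow_mul, hζ.zpow_eq_one_iff_dvd]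
      exact dvd_mul_left _ _
    rw [geom_sum_eq (mt (hζ.zpow_eq_one_iff_dvd m).mp hdvd), hpow, sub_self, zero_div, Nat.cast_zero]

theorem hasSum_fourierCoeff_mul_natCast {T : ℝ} [hT : Fact (0 < T)] {g : C(AddCircle T, ℂ)}
    (hg : Summable (fourierCoeff g)) {n : ℕ} (hn : n ≠ 0) :
    HasSum (fun j : ℤ ↦ fourierCoeff g (j * n))
      ((n : ℂ)⁻¹ * ∑ k ∈ range n, g (k * T / n : ℝ)) := by
  rw [← hasSum_ite_dvd_iff (Int.natCast_ne_zero.mpr hn)]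
  have hnodes := (hasSum_sum (s := range n) fun (k : ℕ) _ ↦
    has_pointwise_sum_fourier_series_of_summable hg ((k * T / n : ℝ) : AddCircle T)).mul_left
    (n : ℂ)⁻¹
  refine hnodes.congr_fun fun m ↦ ?_
  simp_rw [smul_eq_mul, ← mul_sum, sum_range_fourier_natCast_mul_div hT.out.ne' hn]
  split_ifs
  · field_simp
  · simp

noncomputable def Function.Periodic.liftContinuousMap {B : Type*} [TopologicalSpace B]
    {f : ℝ → B} {T : ℝ} (hper : Function.Periodic f T) (hf : Continuous f) :
    C(AddCircle T, B) :=
  ⟨hper.lift, continuous_coinduced_dom.mpr hf⟩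

@[simp]
theorem Function.Periodic.liftContinuousMap_coe {B : Type*} [TopologicalSpace B]
    {f : ℝ → B} {T : ℝ} (hper : Function.Periodic f T) (hf : Continuous f) (x : ℝ) :
    hper.liftContinuousMap hf x = f x :=
  hper.lift_coe x

open Complex in
theorem fourierCoeff_unitAddCircle_eq_intervalIntegral (g : UnitAddCircle → ℂ) (m : ℤ) :
    fourierCoeff g m = ∫ s in (0 : ℝ)..1, g s * cexp (-(2 * π * I * m * s)) := by
  rw [fourierCoeff_eq_intervalIntegral g m 0, zero_add, div_one, one_smul]
  refine intervalIntegral.integral_congr fun s _ ↦ ?_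
  rw [smul_eq_mul, fourier_coe_apply, mul_comm]
  push_cast
  ring_nf

open Complex in
theorem integral_ofReal_mul_cexp_add_neg_eq_cos {f : ℝ → ℝ} {a b : ℝ}
    (hf : IntervalIntegrable f volume a b) (t : ℝ) :
    (∫ s in a..b, (f s : ℂ) * cexp (-(2 * π * I * t * s))) +
        ∫ s in a..b, (f s : ℂ) * cexp (-(2 * π * I * (-t : ℝ) * s)) =
      ((2 * ∫ s in a..b, f s * Real.cos (2 * π * t * s) : ℝ) : ℂ) := by
  have hint (u : ℝ) : IntervalIntegrable (fun s ↦ (f s : ℂ) * cexp (-(2 * π * I * u * s)))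
      volume a b :=
    IntervalIntegrable.mul_continuousOn ⟨hf.1.ofReal, hf.2.ofReal⟩ (by fun_prop)
  rw [← intervalIntegral.integral_add (hint t) (hint (-t)), ← intervalIntegral.integral_const_mul,
    ← intervalIntegral.integral_ofReal]
  refine intervalIntegral.integral_congr fun s _ ↦ ?_
  push_cast
  rw [mul_left_comm, two_cos]
  ring_nf

theorem trapezoid_sum_eq_sum_range {f : ℝ → ℝ} (h : f 1 = f 0) {n : ℕ} (hn : 0 < n) :
    f 0 / 2 + ∑ k ∈ Ico 1 n, f (k / n) + f 1 / 2 = ∑ k ∈ range n, f (k / n) := by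
  rw [range_eq_Ico, sum_eq_sum_Ico_succ_bot hn, h]
  simp only [CharP.cast_eq_zero, zero_div]
  ring

open Complex in
theorem hasSum_mul_natCast_trapezoid {f : ℝ → ℝ} (hf : Continuous f)
    (hper : Function.Periodic f 1) {c : ℤ → ℂ}
    (hc : ∀ m : ℤ, c m = ∫ s in (0 : ℝ)..1, (f s : ℂ) * cexp (-(2 * π * I * m * s)))
    (hsum : Summable c) {n : ℕ} (hn : 0 < n) :
    HasSum (fun j : ℤ ↦ c (j * n))
      ((1 / (n : ℝ) * (f 0 / 2 + ∑ k ∈ Ico 1 n, f (k / n) + f 1 / 2) : ℝ) : ℂ) := by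
  let g := (hper.comp ofReal).liftContinuousMap (continuous_ofReal.comp hf)
  have hcoeff : fourierCoeff g = c := funext fun m ↦ by
    simp [fourierCoeff_unitAddCircle_eq_intervalIntegral, hc, g]
  have h := hasSum_fourierCoeff_mul_natCast (hcoeff ▸ hsum) hn.ne'
  simp only [hcoeff, g, Function.Periodic.liftContinuousMap_coe, mul_one] at h
  rw [trapezoid_sum_eq_sum_range (by simpa using hper 0) hn]
  simpa using h

/-- Let `f : ℝ → ℝ` be continuous and 1-periodic with absolutely summable
Fourier coefficients `c_m = ∫_0^1 f(s) e^{-2πims} ds`. For `n > 0`, `h = 1/n`,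
the error of the compound trapezoidal rule
`T_h = h (f(0)/2 + ∑_{k=1}^{n-1} f(k h) + f(1)/2)` is
`∫_0^1 f - T_h = -2 ∑_{k=1}^∞ F_k` with `F_k = ∫_0^1 f(s) cos(2πkns) ds`,
the series converging absolutely. -/
theorem trapezoidal_error_fourier (f : ℝ → ℝ) (hf : Continuous f)
    (hper : Function.Periodic f 1)
    (c : ℤ → ℂ)
    (hc : ∀ m : ℤ, c m =
      ∫ s in (0 : ℝ)..1, (f s : ℂ) *
        Complex.exp (-(2 * Real.pi * Complex.I * (m : ℂ) * (s : ℂ))))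
    (hsum : Summable fun m : ℤ => ‖c m‖)
    (n : ℕ) (hn : 0 < n)
    (F : ℕ → ℝ)
    (hF : ∀ k : ℕ, F k = ∫ s in (0 : ℝ)..1, f s * Real.cos (2 * Real.pi * k * n * s)) :
    (Summable fun k : ℕ => |F (k + 1)|) ∧
      (∫ s in (0 : ℝ)..1, f s)
          - (1 / (n : ℝ)) *
              (f 0 / 2 + ∑ k ∈ Finset.Ico 1 n, f (k / (n : ℝ)) + f 1 / 2)
        = -2 * ∑' k : ℕ, F (k + 1) := by
  have htrap := hasSum_mul_natCast_trapezoid hf hper hc hsum.of_norm hn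
  have hcos (k : ℕ) : c (k * n) + c (-k * n) = ((2 * F k : ℝ) : ℂ) := by
    rw [hc, hc, hF]
    convert integral_ofReal_mul_cexp_add_neg_eq_cos (hf.intervalIntegrable 0 1) (k * n : ℝ)
      using 4 <;> push_cast <;> ring_nf
  have hF0 : F 0 = ∫ s in (0 : ℝ)..1, f s := by simp [hF]
  have hmult : Summable fun j : ℤ ↦ ‖c (j * n)‖ :=
    hsum.comp_injective (mul_left_injective₀ (Int.natCast_ne_zero.mpr hn.ne'))
  refine ⟨summable_abs_nat_add_one_of_add_neg_eq_two_mul hmult hcos, ?_⟩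
  rw [(hasSum_nat_add_one_of_add_neg_eq_two_mul htrap hcos).tsum_eq, hF0]
  ring
end

section
/- Let f : ℝ → ℝ be continuous and 1-periodic, and suppose its Fourier coefficients c_m = ∫_0^1 f(s) e^{-2πi m s} ds satisfy ∑_{m ∈ ℤ} |c_m| < ∞. Let n be a positive natural number, h = 1/n, and let S_h = h·∑_{k=0}^{n-1} f(k h + h/2) be the shifted (midpoint) rule. Then the quadrature error satisfies ∫_0^1 f(s) ds - S_h = -2 ∑_{k=1}^∞ (-1)^k F_k, where F_k = ∫_0^1 f(s) cos(2π k n s) ds, and the series converges absolutely. -/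
/-!
A continuous 1-periodic `f` with absolutely summable Fourier coefficients is the pointwise sum of
its Fourier series, so the midpoint rule may be applied term by term. On `e^{2πims}` the rule
with `n` nodes gives `(-1)^{m/n}` when `n ∣ m` and `0` otherwise, hence
`S_h = ∑_j (-1)^j c_{jn}`. The term `j = 0` is `∫_0^1 f`, and for real `f` the terms `±j` pair up
to `(-1)^j (c_{jn} + c_{-jn}) = 2 (-1)^j F_j`.
-/

open MeasureTheory Real Finset

theorem Function.Periodic.hasSum_fourier_of_summable {f : ℝ → ℂ} (hf : Continuous f)
    (hper : Function.Periodic f 1) {c : ℤ → ℂ}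
    (hc : ∀ m : ℤ, c m =
      ∫ s in (0 : ℝ)..1, f s * Complex.exp (-(2 * π * Complex.I * m * s)))
    (hsum : Summable c) (x : ℝ) :
    HasSum (fun m : ℤ => c m * Complex.exp (2 * π * Complex.I * m * x)) (f x) := by
  have : Fact ((0 : ℝ) < 1) := ⟨one_pos⟩
  let g : C(AddCircle (1 : ℝ), ℂ) := ⟨hper.lift, hf.quotient_liftOn' _⟩
  have hg_coe (x : ℝ) : g x = f x := rfl
  have hcoeff : fourierCoeff g = c := by
    ext m
    rw [fourierCoeff_eq_intervalIntegral _ m 0, hc m]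
    simp only [fourier_coe_apply, hg_coe, smul_eq_mul, div_one, one_smul, zero_add]
    refine intervalIntegral.integral_congr fun s _ => ?_
    push_cast
    ring_nf
  have hg := has_pointwise_sum_fourier_series_of_summable (hcoeff ▸ hsum) (x : AddCircle (1 : ℝ))
  rw [hcoeff] at hg
  simpa [fourier_coe_apply, hg_coe] using hg

theorem sum_range_exp_midpoint {n : ℕ} (hn : 0 < n) (m : ℤ) :
    ∑ k ∈ range n, Complex.exp (2 * π * Complex.I * m * ((k / n + 1 / (2 * n) : ℝ) : ℂ)) =
      if (n : ℤ) ∣ m then n * (-1 : ℂ) ^ (m / n) else 0 := by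
  have hn0 : (n : ℂ) ≠ 0 := Nat.cast_ne_zero.2 hn.ne'
  set ω := Complex.exp (2 * π * Complex.I / n)
  have hω : IsPrimitiveRoot ω n := Complex.isPrimitiveRoot_exp n hn.ne'
  have hterm (k : ℕ) : Complex.exp (2 * π * Complex.I * m * ((k / n + 1 / (2 * n) : ℝ) : ℂ)) =
      Complex.exp (π * Complex.I * m / n) * (ω ^ m) ^ k := by
    rw [← Complex.exp_int_mul, ← Complex.exp_nat_mul, ← Complex.exp_add]
    push_cast
    field_simp
    ring_nf
  simp_rw [hterm, ← mul_sum]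
  split_ifs with hdvd
  · obtain ⟨j, rfl⟩ := hdvd
    have hhalf : Complex.exp (π * Complex.I * (n * j : ℤ) / n) = (-1) ^ j := by
      rw [← Complex.exp_pi_mul_I, ← Complex.exp_int_mul]
      push_cast
      field_simp
    rw [(hω.zpow_eq_one_iff_dvd _).2 (dvd_mul_right _ _), hhalf,
      Int.mul_ediv_cancel_left _ (Int.natCast_ne_zero.2 hn.ne')]
    simp [mul_comm]
  · have hne : ω ^ m ≠ 1 := mt (hω.zpow_eq_one_iff_dvd m).1 hdvd
    rw [geom_sum_eq hne, ← zpow_natCast, ← zpow_mul, mul_comm m, zpow_mul, zpow_natCast,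
      hω.pow_eq_one]
    simp

theorem hasSum_midpoint_sum {f : ℝ → ℂ} {c : ℤ → ℂ}
    (hf : ∀ x : ℝ, HasSum (fun m : ℤ => c m * Complex.exp (2 * π * Complex.I * m * x)) (f x))
    {n : ℕ} (hn : 0 < n) :
    HasSum (fun j : ℤ => (-1 : ℂ) ^ j * c (j * n))
      ((1 / n : ℂ) * ∑ k ∈ range n, f (k / n + 1 / (2 * n))) := by
  have hn0 : (n : ℤ) ≠ 0 := Int.natCast_ne_zero.2 hn.ne'
  have hsum := (hasSum_sum fun k (_ : k ∈ range n) => hf (k / n + 1 / (2 * n))).mul_left (1 / n : ℂ)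
  simp_rw [← mul_sum, sum_range_exp_midpoint hn] at hsum
  rw [← (mul_left_injective₀ hn0).hasSum_iff] at hsum
  · refine hsum.congr_fun fun j => ?_
    have hnC : (n : ℂ) ≠ 0 := Nat.cast_ne_zero.2 hn.ne'
    simp only [one_div, mul_ite, mul_zero, Function.comp_apply, dvd_mul_left, ↓reduceIte,
      Int.mul_ediv_cancel _ hn0]
    field_simp
  · intro m hm
    rw [if_neg (fun ⟨j, hj⟩ => hm ⟨j, hj ▸ mul_comm _ _⟩), mul_zero, mul_zero]

theorem coeff_add_coeff_neg {f : ℝ → ℝ} (hf : IntervalIntegrable f volume 0 1) {c : ℤ → ℂ}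
    (hc : ∀ m : ℤ, c m =
      ∫ s in (0 : ℝ)..1, (f s : ℂ) * Complex.exp (-(2 * π * Complex.I * m * s)))
    (m : ℤ) :
    c m + c (-m) = ((2 * ∫ s in (0 : ℝ)..1, f s * Real.cos (2 * π * m * s) : ℝ) : ℂ) := by
  have hfC : IntervalIntegrable (fun s => (f s : ℂ)) volume 0 1 := ⟨hf.1.ofReal, hf.2.ofReal⟩
  rw [hc, hc, ← intervalIntegral.integral_add (hfC.mul_continuousOn (by fun_prop))
    (hfC.mul_continuousOn (by fun_prop)), Complex.ofReal_mul, ← intervalIntegral.integral_ofReal,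
    ← intervalIntegral.integral_const_mul]
  refine intervalIntegral.integral_congr fun s _ => ?_
  push_cast
  rw [← mul_add, mul_left_comm, Complex.two_cos]
  ring_nf

theorem HasSum.nat_add_one_of_add_neg_eq {b : ℤ → ℂ} {s : ℝ} {a : ℕ → ℝ} (hb : HasSum b s)
    (hab : ∀ k : ℕ, b k + b (-k) = 2 * a k) : HasSum (fun k => a (k + 1)) ((s - a 0) / 2) := by
  have hb0 : b 0 = a 0 := by
    have := hab 0
    rw [Nat.cast_zero, neg_zero] at this
    linear_combination this / 2
  have hpairs : HasSum (fun k => 2 * a k) (s + a 0) := by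
    rw [← Complex.hasSum_ofReal]
    push_cast
    exact hb0 ▸ hb.nat_add_neg.congr_fun fun k => (hab k).symm
  have ha : HasSum a ((s + a 0) / 2) :=
    (hpairs.div_const 2).congr_fun fun k => (mul_div_cancel_left₀ _ two_ne_zero).symm
  have := (hasSum_nat_add_iff' (f := a) 1).2 ha
  rwa [sum_range_one, show (s + a 0) / 2 - a 0 = (s - a 0) / 2 by ring] at this

theorem summable_abs_of_add_neg_eq {b : ℤ → ℂ} {a : ℕ → ℝ}
    (hb : Summable fun j => ‖b j‖) (hab : ∀ k : ℕ, b k + b (-k) = 2 * a k) :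
    Summable fun k => |a k| := by
  refine (hb.nat_add_neg.div_const 2).of_nonneg_of_le (fun k => abs_nonneg _) fun k => ?_
  have := norm_add_le (b k) (b (-k))
  rw [hab, norm_mul, Complex.norm_real, Real.norm_eq_abs, Complex.norm_two] at this
  linarith

/-- Let `f : ℝ → ℝ` be continuous and 1-periodic with absolutely summable
Fourier coefficients `c_m = ∫_0^1 f(s) e^{-2πims} ds`. For `n > 0`, `h = 1/n`,
the error of the shifted (midpoint) rule `S_h = h ∑_{k=0}^{n-1} f(k h + h/2)` is
`∫_0^1 f - S_h = -2 ∑_{k=1}^∞ (-1)^k F_k` with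
`F_k = ∫_0^1 f(s) cos(2πkns) ds`, the series converging absolutely. -/
theorem midpoint_error_fourier (f : ℝ → ℝ) (hf : Continuous f)
    (hper : Function.Periodic f 1)
    (c : ℤ → ℂ)
    (hc : ∀ m : ℤ, c m =
      ∫ s in (0 : ℝ)..1, (f s : ℂ) *
        Complex.exp (-(2 * Real.pi * Complex.I * (m : ℂ) * (s : ℂ))))
    (hsum : Summable fun m : ℤ => ‖c m‖)
    (n : ℕ) (hn : 0 < n)
    (F : ℕ → ℝ)
    (hF : ∀ k : ℕ, F k = ∫ s in (0 : ℝ)..1, f s * Real.cos (2 * Real.pi * k * n * s)) :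
    (Summable fun k : ℕ => |F (k + 1)|) ∧
      (∫ s in (0 : ℝ)..1, f s)
          - (1 / (n : ℝ)) *
              ∑ k ∈ Finset.range n, f (k / (n : ℝ) + 1 / (2 * n : ℝ))
        = -2 * ∑' k : ℕ, (-1 : ℝ) ^ (k + 1) * F (k + 1) := by
  set S := (1 / (n : ℝ)) * ∑ k ∈ Finset.range n, f (k / (n : ℝ) + 1 / (2 * n : ℝ))
  set b : ℤ → ℂ := fun j => (-1) ^ j * c (j * n)
  have hb : HasSum b S := by
    have hperC : Function.Periodic (fun s => (f s : ℂ)) 1 := fun s => by simp [hper s]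
    simpa [S] using hasSum_midpoint_sum
      (hperC.hasSum_fourier_of_summable (by fun_prop) hc hsum.of_norm) hn
  have hb_norm : Summable fun j => ‖b j‖ :=
    (hsum.comp_injective (mul_left_injective₀ (Int.natCast_ne_zero.2 hn.ne'))).congr
      fun j => by simp [b]
  have hb_pair (k : ℕ) : b k + b (-k) = 2 * (((-1) ^ k * F k : ℝ) : ℂ) := by
    simp only [b, zpow_neg, zpow_natCast, ← inv_pow, inv_neg, inv_one, neg_mul, ← mul_add]
    rw [coeff_add_coeff_neg (hf.intervalIntegrable 0 1) hc, hF]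
    push_cast
    simp_rw [mul_assoc]
    ring
  have hF0 : F 0 = ∫ s in (0 : ℝ)..1, f s := by simp [hF]
  refine ⟨(summable_nat_add_iff (f := fun k => |F k|) 1).2 ?_, ?_⟩
  · exact (summable_abs_of_add_neg_eq hb_norm hb_pair).congr fun k => by simp [abs_mul]
  · rw [(hb.nat_add_one_of_add_neg_eq hb_pair).tsum_eq, pow_zero, one_mul, hF0]
    ring
end
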